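/- Let M be a flat left R-module. Then every A ∈ 𝒜 is a flat left R-module if and only if every submodule of every M-𝒜-flat right R-module is M-𝒜-flat. -/

import Mathlib

open TensorProduct MulOpposite CategoryTheory

universe u

section NC

variable (R : Type u) [Ring R]

/-- The defining relations of the tensor product `N ⊗[R] X` of a right `R`-module `N`
and a left `R`-module `X` over a (possibly noncommutative) ring `R`, inside `N ⊗[ℤ] X`. -/
def ncRel (N : Type u) [AddCommGroup N] [Module Rᵐᵒᵖ N]
    (X : Type u) [AddCommGroup X] [Module R X] : Submodule ℤ (N ⊗[ℤ] X) :=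
  Submodule.span ℤ {z | ∃ (r : R) (n : N) (x : X), z = (op r • n) ⊗ₜ[ℤ] x - n ⊗ₜ[ℤ] (r • x)}

/-- The tensor product `N ⊗[R] X` of a right `R`-module `N` and a left `R`-module `X`
over a (possibly noncommutative) ring `R`. -/
abbrev NCTensor (N : Type u) [AddCommGroup N] [Module Rᵐᵒᵖ N]
    (X : Type u) [AddCommGroup X] [Module R X] : Type u :=
  (N ⊗[ℤ] X) ⧸ ncRel R N X

/-- Functoriality of the tensor product in the left (right-module) variable. -/
noncomputable def ncMapL {N N' : Type u} [AddCommGroup N] [Module Rᵐᵒᵖ N]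
    [AddCommGroup N'] [Module Rᵐᵒᵖ N'] (g : N →ₗ[Rᵐᵒᵖ] N')
    (X : Type u) [AddCommGroup X] [Module R X] :
    NCTensor R N X →ₗ[ℤ] NCTensor R N' X :=
  Submodule.mapQ _ _ (LinearMap.rTensor X g.toAddMonoidHom.toIntLinearMap) (by
    rw [ncRel, Submodule.span_le]
    rintro _ ⟨r, n, x, rfl⟩
    change LinearMap.rTensor X g.toAddMonoidHom.toIntLinearMap
      ((op r • n) ⊗ₜ[ℤ] x - n ⊗ₜ[ℤ] (r • x)) ∈ ncRel R N' X
    refine Submodule.subset_span ⟨r, g n, x, ?_⟩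
    rw [map_sub, LinearMap.rTensor_tmul, LinearMap.rTensor_tmul]
    have h : g.toAddMonoidHom.toIntLinearMap (op r • n) =
        op r • g.toAddMonoidHom.toIntLinearMap n := by
      simp [map_smul]
    rw [h]
    rfl)

/-- Functoriality of the tensor product in the right (left-module) variable. -/
noncomputable def ncMap (N : Type u) [AddCommGroup N] [Module Rᵐᵒᵖ N]
    {X Y : Type u} [AddCommGroup X] [Module R X] [AddCommGroup Y] [Module R Y]
    (f : X →ₗ[R] Y) : NCTensor R N X →ₗ[ℤ] NCTensor R N Y :=
  Submodule.mapQ _ _ (LinearMap.lTensor N f.toAddMonoidHom.toIntLinearMap) (by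
    rw [ncRel, Submodule.span_le]
    rintro _ ⟨r, n, x, rfl⟩
    change LinearMap.lTensor N f.toAddMonoidHom.toIntLinearMap
      ((op r • n) ⊗ₜ[ℤ] x - n ⊗ₜ[ℤ] (r • x)) ∈ ncRel R N Y
    refine Submodule.subset_span ⟨r, n, f x, ?_⟩
    rw [map_sub, LinearMap.lTensor_tmul, LinearMap.lTensor_tmul]
    have h : f.toAddMonoidHom.toIntLinearMap (r • x) =
        r • f.toAddMonoidHom.toIntLinearMap x := by
      simp [map_smul]
    rw [h]
    rfl)

lemma ncMap_mk (N : Type u) [AddCommGroup N] [Module Rᵐᵒᵖ N]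
    {X Y : Type u} [AddCommGroup X] [Module R X] [AddCommGroup Y] [Module R Y]
    (f : X →ₗ[R] Y) (w : N ⊗[ℤ] X) :
    ncMap R N f (Submodule.Quotient.mk w) =
      Submodule.Quotient.mk (LinearMap.lTensor N f.toAddMonoidHom.toIntLinearMap w) := by
  unfold ncMap
  exact Submodule.mapQ_apply (p := ncRel R N X) (q := ncRel R N Y) (LinearMap.lTensor N f.toAddMonoidHom.toIntLinearMap) w

section lemmas

variable {R}
variable {X Y Z : Type u} [AddCommGroup X] [Module R X] [AddCommGroup Y] [Module R Y]
  [AddCommGroup Z] [Module R Z]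

lemma toInt_id : ((LinearMap.id : X →ₗ[R] X).toAddMonoidHom).toIntLinearMap =
    (LinearMap.id : X →ₗ[ℤ] X) := rfl

lemma toInt_comp (f : X →ₗ[R] Y) (g : Y →ₗ[R] Z) :
    ((g ∘ₗ f).toAddMonoidHom).toIntLinearMap =
      g.toAddMonoidHom.toIntLinearMap ∘ₗ f.toAddMonoidHom.toIntLinearMap := rfl

lemma toInt_add (f g : X →ₗ[R] Y) :
    ((f + g).toAddMonoidHom).toIntLinearMap =
      f.toAddMonoidHom.toIntLinearMap + g.toAddMonoidHom.toIntLinearMap := rfl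

end lemmas

/-- The functor `N ⊗[R] - : R-Mod ⥤ Ab` for a right `R`-module `N`. -/
noncomputable def ncTensorFunctor (N : Type u) [AddCommGroup N] [Module Rᵐᵒᵖ N] :
    ModuleCat.{u} R ⥤ ModuleCat.{u} ℤ where
  obj X := ModuleCat.of ℤ (NCTensor R N X)
  map {X Y} f := ModuleCat.ofHom (ncMap R N f.hom)
  map_id X := by
    refine ModuleCat.hom_ext (LinearMap.ext fun z => ?_)
    obtain ⟨w, rfl⟩ := Submodule.Quotient.mk_surjective _ z
    show ncMap R N (LinearMap.id : X →ₗ[R] X) _ = _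
    rw [ncMap_mk, toInt_id, LinearMap.lTensor_id]
    rfl
  map_comp {X Y Z} f g := by
    refine ModuleCat.hom_ext (LinearMap.ext fun z => ?_)
    obtain ⟨w, rfl⟩ := Submodule.Quotient.mk_surjective _ z
    show ncMap R N (g.hom ∘ₗ f.hom) (Submodule.Quotient.mk w) = ncMap R N g.hom (ncMap R N f.hom (Submodule.Quotient.mk w))
    rw [ncMap_mk, ncMap_mk, ncMap_mk, toInt_comp, LinearMap.lTensor_comp]
    rfl

instance ncTensorFunctor_additive (N : Type u) [AddCommGroup N] [Module Rᵐᵒᵖ N] :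
    (ncTensorFunctor R N).Additive where
  map_add {X Y f g} := by
    refine ModuleCat.hom_ext (LinearMap.ext fun z => ?_)
    obtain ⟨w, rfl⟩ := Submodule.Quotient.mk_surjective _ z
    show ncMap R N (f.hom + g.hom) (Submodule.Quotient.mk w) = ncMap R N f.hom (Submodule.Quotient.mk w) + ncMap R N g.hom (Submodule.Quotient.mk w)
    rw [ncMap_mk, ncMap_mk, ncMap_mk, toInt_add, LinearMap.lTensor_add]
    rfl

/-- `Tor₁^R(N, Z)` for a right `R`-module `N` and a left `R`-module `Z`, defined as the value at
`Z` of the first left derived functor of the functor `N ⊗[R] -`. -/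
noncomputable def ncTor1 (N : Type u) [AddCommGroup N] [Module Rᵐᵒᵖ N]
    (Z : Type u) [AddCommGroup Z] [Module R Z] : ModuleCat.{u} ℤ :=
  (((ncTensorFunctor R N).leftDerived 1).obj (ModuleCat.of R Z))

/-- `Tor₁^R(N, Z) = 0`. -/
def Tor1IsZero (N : Type u) [AddCommGroup N] [Module Rᵐᵒᵖ N]
    (Z : Type u) [AddCommGroup Z] [Module R Z] : Prop :=
  Limits.IsZero (ncTor1 R N Z)

/-- `Ext¹_R(Z, T) = 0`, where `Ext` is the derived functor of `Hom` on the category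
of left `R`-modules. -/
def Ext1IsZero (Z T : Type u) [AddCommGroup Z] [Module R Z] [AddCommGroup T] [Module R T] :
    Prop :=
  Limits.IsZero ((((Ext ℤ (ModuleCat.{u} R) 1).obj (Opposite.op (ModuleCat.of R Z))).obj
    (ModuleCat.of R T)))

end NC

open MulOpposite


section Char

variable (R : Type u) [Ring R]

/-- The right `R`-module structure on the character module `A⁺ = Hom_ℤ(A, ℚ/ℤ)` of a left
`R`-module `A`, given by `(c • r) (a) = c (r • a)`. -/
instance charModuleRight (A : Type u) [AddCommGroup A] [Module R A] :
    Module Rᵐᵒᵖ (CharacterModule A) where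
  smul r c := (c.comp (DistribMulAction.toAddMonoidHom A r.unop) : A →+ _)
  one_smul c := DFunLike.ext _ _ fun a => congrArg c (one_smul R a)
  mul_smul r s c := DFunLike.ext _ _ fun a => congrArg c (mul_smul s.unop r.unop a)
  smul_zero r := rfl
  smul_add r c c' := rfl
  add_smul r s c := DFunLike.ext _ _ fun a => by
    show c ((r.unop + s.unop) • a) = c (r.unop • a) + c (s.unop • a)
    rw [add_smul, map_add]
  zero_smul c := DFunLike.ext _ _ fun a => by
    show c ((0 : R) • a) = 0
    rw [zero_smul, map_zero]

/-- The left `R`-module structure on the character module `N⁺ = Hom_ℤ(N, ℚ/ℤ)` of a right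
`R`-module `N`, given by `(r • c) (n) = c (n • r)`. -/
instance charModuleLeft (N : Type u) [AddCommGroup N] [Module Rᵐᵒᵖ N] :
    Module R (CharacterModule N) where
  smul r c := (c.comp (DistribMulAction.toAddMonoidHom N (op r)) : N →+ _)
  one_smul c := DFunLike.ext _ _ fun n => congrArg c (one_smul Rᵐᵒᵖ n)
  mul_smul r s c := DFunLike.ext _ _ fun n => congrArg c (mul_smul (op s) (op r) n)
  smul_zero r := rfl
  smul_add r c c' := rfl
  add_smul r s c := DFunLike.ext _ _ fun n => by
    show c ((op r + op s) • n) = c (op r • n) + c (op s • n)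
    rw [add_smul, map_add]
  zero_smul c := DFunLike.ext _ _ fun n => by
    show c ((0 : Rᵐᵒᵖ) • n) = 0
    rw [zero_smul, map_zero]

end Char

section Classes

variable (R : Type u) [Ring R] (M : Type u) [AddCommGroup M] [Module R M]

/-- `T` is `M`-`𝒜`-injective if, for every `A ∈ 𝒜`, every homomorphism `A → T` extends to `M`,
i.e. the restriction map `Hom(M, T) → Hom(A, T)` is surjective. -/
def MAInjective (𝒜 : Set (Submodule R M)) (T : Type u) [AddCommGroup T] [Module R T] : Prop :=
  ∀ A ∈ 𝒜, ∀ f : (↥A) →ₗ[R] T, ∃ g : M →ₗ[R] T, g ∘ₗ A.subtype = f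

/-- `T` is strongly `M`-`𝒜`-injective if `Ext¹_R(M/A, T) = 0` for all `A ∈ 𝒜`. -/
def SMAInjective (𝒜 : Set (Submodule R M)) (T : Type u) [AddCommGroup T] [Module R T] : Prop :=
  ∀ A ∈ 𝒜, Ext1IsZero R (M ⧸ A) T

/-- A right `R`-module `N` is `M`-`𝒜`-flat if `N ⊗ A → N ⊗ M` is injective for all `A ∈ 𝒜`. -/
def MAFlat (𝒜 : Set (Submodule R M)) (N : Type u) [AddCommGroup N] [Module Rᵐᵒᵖ N] : Prop :=
  ∀ A ∈ 𝒜, Function.Injective (ncMap R N A.subtype)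

/-- A right `R`-module `N` is strongly `M`-`𝒜`-flat if `Tor₁^R(N, M/A) = 0` for all `A ∈ 𝒜`. -/
def SMAFlat (𝒜 : Set (Submodule R M)) (N : Type u) [AddCommGroup N] [Module Rᵐᵒᵖ N] : Prop :=
  ∀ A ∈ 𝒜, Tor1IsZero R N (M ⧸ A)

end Classes

section Flat

variable (R : Type u) [Ring R]

/-- A left `R`-module `Z` is flat if tensoring with it preserves injectivity of morphisms of
right `R`-modules. -/
def FlatLeftModule (Z : Type u) [AddCommGroup Z] [Module R Z] : Prop :=
  ∀ (N N' : Type u) [AddCommGroup N] [Module Rᵐᵒᵖ N] [AddCommGroup N'] [Module Rᵐᵒᵖ N']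
    (g : N' →ₗ[Rᵐᵒᵖ] N), Function.Injective g → Function.Injective (ncMapL R g Z)

end Flat

/-!
Tensoring the inclusions `K ≤ T` and `A ≤ M` gives a commutative square, so injectivity of
two sides forces injectivity of a third. For the forward direction, `K ⊗ A → T ⊗ A → T ⊗ M` is
injective because `A` is flat and `T` is `M`-`𝒜`-flat. For the converse, free right modules are
`M`-`𝒜`-flat, hence so are their submodules `F`, and flatness of `M` then makes `F ⊗ A → P ⊗ A`
injective for every submodule `F` of a free module `P`. A diagram chase along a free
presentation `P ↠ N` (the usual proof that `Tor₁(N, A) = 0` for all `N` implies flatness)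
shows that `N' ⊗ A → N ⊗ A` is injective whenever `N' → N` is.
-/

section TensorLemmas

variable {R : Type u} [Ring R]
variable {N N' N'' : Type u} [AddCommGroup N] [Module Rᵐᵒᵖ N] [AddCommGroup N'] [Module Rᵐᵒᵖ N']
  [AddCommGroup N''] [Module Rᵐᵒᵖ N'']
variable {X Y : Type u} [AddCommGroup X] [Module R X] [AddCommGroup Y] [Module R Y]

lemma ncMapL_mk (g : N →ₗ[Rᵐᵒᵖ] N') (w : N ⊗[ℤ] X) :
    ncMapL R g X (Submodule.Quotient.mk w) =
      Submodule.Quotient.mk (LinearMap.rTensor X g.toAddMonoidHom.toIntLinearMap w) := by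
  unfold ncMapL
  exact Submodule.mapQ_apply (p := ncRel R N X) (q := ncRel R N' X) _ w

lemma ncMapL_comp (g : N →ₗ[Rᵐᵒᵖ] N') (g' : N' →ₗ[Rᵐᵒᵖ] N'') (t : NCTensor R N X) :
    ncMapL R (g' ∘ₗ g) X t = ncMapL R g' X (ncMapL R g X t) := by
  obtain ⟨w, rfl⟩ := Submodule.Quotient.mk_surjective _ t
  have hcomp : ((g' ∘ₗ g).toAddMonoidHom).toIntLinearMap =
      g'.toAddMonoidHom.toIntLinearMap ∘ₗ g.toAddMonoidHom.toIntLinearMap := rfl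
  rw [ncMapL_mk, ncMapL_mk, ncMapL_mk, hcomp, LinearMap.rTensor_comp, LinearMap.comp_apply]

lemma ncMapL_zero (t : NCTensor R N X) : ncMapL R (0 : N →ₗ[Rᵐᵒᵖ] N') X t = 0 := by
  obtain ⟨w, rfl⟩ := Submodule.Quotient.mk_surjective _ t
  rw [ncMapL_mk]
  have h0 : ((0 : N →ₗ[Rᵐᵒᵖ] N').toAddMonoidHom).toIntLinearMap = 0 := rfl
  rw [h0, LinearMap.rTensor_zero, LinearMap.zero_apply, Submodule.Quotient.mk_zero]

lemma ncMap_comp_ncMapL (g : N' →ₗ[Rᵐᵒᵖ] N) (f : X →ₗ[R] Y) :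
    ncMap R N f ∘ ncMapL R g X = ncMapL R g Y ∘ ncMap R N' f := by
  funext t
  obtain ⟨w, rfl⟩ := Submodule.Quotient.mk_surjective _ t
  simp only [Function.comp_apply, ncMapL_mk, ncMap_mk, ← LinearMap.comp_apply,
    LinearMap.lTensor_comp_rTensor, LinearMap.rTensor_comp_lTensor]

lemma ncMapL_injective_of_ncMap_injective {g : N' →ₗ[Rᵐᵒᵖ] N} {f : X →ₗ[R] Y}
    (hf : Function.Injective (ncMap R N' f)) (hg : Function.Injective (ncMapL R g Y)) :
    Function.Injective (ncMapL R g X) :=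
  Function.Injective.of_comp (f := ncMap R N f) <| by
    rw [ncMap_comp_ncMapL]; exact hg.comp hf

lemma ncMap_injective_of_ncMapL_injective {g : N' →ₗ[Rᵐᵒᵖ] N} {f : X →ₗ[R] Y}
    (hg : Function.Injective (ncMapL R g X)) (hf : Function.Injective (ncMap R N f)) :
    Function.Injective (ncMap R N' f) :=
  Function.Injective.of_comp (f := ncMapL R g Y) <| by
    rw [← ncMap_comp_ncMapL]; exact hf.comp hg

lemma ncMapL_surjective {g : N →ₗ[Rᵐᵒᵖ] N'} (hg : Function.Surjective g) :
    Function.Surjective (ncMapL R g X) := by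
  intro t
  obtain ⟨w, rfl⟩ := Submodule.Quotient.mk_surjective _ t
  obtain ⟨w', rfl⟩ := LinearMap.rTensor_surjective X (g := g.toAddMonoidHom.toIntLinearMap) hg w
  exact ⟨Submodule.Quotient.mk w', ncMapL_mk g w'⟩

lemma ncRel_le_map_of_surjective {p : N →ₗ[Rᵐᵒᵖ] N'} (hp : Function.Surjective p) :
    ncRel R N' X ≤ (ncRel R N X).map (LinearMap.rTensor X p.toAddMonoidHom.toIntLinearMap) := by
  refine Submodule.span_le.mpr ?_
  rintro _ ⟨r, n, x, rfl⟩
  obtain ⟨n, rfl⟩ := hp n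
  refine ⟨(op r • n) ⊗ₜ[ℤ] x - n ⊗ₜ[ℤ] (r • x), Submodule.subset_span ⟨r, n, x, rfl⟩, ?_⟩
  simp

lemma ker_ncMapL_le_range_ncMapL {j : N'' →ₗ[Rᵐᵒᵖ] N} {p : N →ₗ[Rᵐᵒᵖ] N'}
    (hjp : Function.Exact j p) (hp : Function.Surjective p) :
    LinearMap.ker (ncMapL R p X) ≤ LinearMap.range (ncMapL R j X) := by
  intro y hy
  obtain ⟨w, rfl⟩ := Submodule.Quotient.mk_surjective _ y
  rw [LinearMap.mem_ker, ncMapL_mk, Submodule.Quotient.mk_eq_zero] at hy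
  obtain ⟨w₀, hw₀, hpw₀⟩ := ncRel_le_map_of_surjective hp hy
  have hpw : LinearMap.rTensor X p.toAddMonoidHom.toIntLinearMap (w - w₀) = 0 := by
    rw [map_sub, hpw₀, sub_self]
  obtain ⟨v, hv⟩ := (rTensor_exact X (f := j.toAddMonoidHom.toIntLinearMap)
    (g := p.toAddMonoidHom.toIntLinearMap) (fun x => hjp x) hp _).mp hpw
  refine ⟨Submodule.Quotient.mk v, ?_⟩
  rw [ncMapL_mk, hv]
  have hw₀ : w₀ ∈ ncRel R N X := hw₀
  exact (Submodule.Quotient.eq _).mpr (by simpa using hw₀)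

end TensorLemmas

section Finsupp

variable {R : Type u} [Ring R] (ι : Type u)
variable {X Y : Type u} [AddCommGroup X] [Module R X] [AddCommGroup Y] [Module R Y]

variable (X) in
/-- `c ⊗ x ↦ (i ↦ c i • x)`, inducing `(ι →₀ Rᵐᵒᵖ) ⊗[R] X ≃ (ι →₀ X)`. -/
noncomputable def finsuppTensorBil : (ι →₀ Rᵐᵒᵖ) →ₗ[ℤ] X →ₗ[ℤ] (ι →₀ X) :=
  LinearMap.mk₂ ℤ (fun c x => c.mapRange (fun r => r.unop • x) (by simp))
    (fun c c' x => by ext i; simp [add_smul])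
    (fun z c x => by
      ext i
      simp only [Finsupp.smul_apply, Finsupp.mapRange_apply, zsmul_eq_mul,
        MulOpposite.unop_mul, MulOpposite.unop_intCast]
      rw [mul_smul, Int.cast_smul_eq_zsmul, smul_comm])
    (fun c x x' => by ext i; simp [smul_add])
    (fun z c x => by ext i; simp [smul_comm z])

variable (X) in
noncomputable def ncTensorFinsupp : NCTensor R (ι →₀ Rᵐᵒᵖ) X →ₗ[ℤ] (ι →₀ X) :=
  Submodule.liftQ _ (TensorProduct.lift (finsuppTensorBil ι X)) (by
    rw [ncRel, Submodule.span_le]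
    rintro _ ⟨r, c, x, rfl⟩
    refine LinearMap.mem_ker.mpr <|
      (map_sub (TensorProduct.lift (finsuppTensorBil (R := R) ι X)) _ _).trans ?_
    rw [sub_eq_zero]
    ext i
    simp [finsuppTensorBil, mul_smul])

variable (X) in
noncomputable def ncTensorFinsuppInv : (ι →₀ X) →ₗ[ℤ] NCTensor R (ι →₀ Rᵐᵒᵖ) X :=
  Finsupp.lsum ℤ fun i =>
    (ncRel R (ι →₀ Rᵐᵒᵖ) X).mkQ ∘ₗ TensorProduct.mk ℤ (ι →₀ Rᵐᵒᵖ) X (Finsupp.single i 1)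

lemma ncTensorFinsupp_mk (w : (ι →₀ Rᵐᵒᵖ) ⊗[ℤ] X) :
    ncTensorFinsupp ι X (Submodule.Quotient.mk w) = TensorProduct.lift (finsuppTensorBil ι X) w :=
  rfl

lemma ncTensorFinsuppInv_single_tmul (i : ι) (r : Rᵐᵒᵖ) (x : X) :
    ncTensorFinsuppInv ι X (Finsupp.single i (r.unop • x)) =
      Submodule.Quotient.mk (Finsupp.single i r ⊗ₜ[ℤ] x) := by
  rw [ncTensorFinsuppInv, Finsupp.lsum_single]
  refine ((Submodule.Quotient.eq _).mpr ?_).symm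
  refine Submodule.subset_span ⟨r.unop, Finsupp.single i 1, x, ?_⟩
  rw [MulOpposite.op_unop, Finsupp.smul_single, smul_eq_mul, mul_one]
  rfl

lemma ncTensorFinsuppInv_ncTensorFinsupp (t : NCTensor R (ι →₀ Rᵐᵒᵖ) X) :
    ncTensorFinsuppInv ι X (ncTensorFinsupp ι X t) = t := by
  obtain ⟨w, rfl⟩ := Submodule.Quotient.mk_surjective _ t
  induction w with
  | zero => simp
  | add a b ha hb => rw [Submodule.Quotient.mk_add, map_add, map_add, ha, hb]
  | tmul c x =>
    rw [ncTensorFinsupp_mk, TensorProduct.lift.tmul]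
    induction c using Finsupp.induction_linear with
    | zero => simp
    | add c c' hc hc' =>
      rw [map_add, LinearMap.add_apply, map_add, hc, hc', TensorProduct.add_tmul,
        Submodule.Quotient.mk_add]
    | single i r =>
      rw [← ncTensorFinsuppInv_single_tmul]
      congr 1
      simp [finsuppTensorBil, Finsupp.mapRange_single]

lemma ncTensorFinsupp_ncMap (f : X →ₗ[R] Y) (t : NCTensor R (ι →₀ Rᵐᵒᵖ) X) :
    ncTensorFinsupp ι Y (ncMap R (ι →₀ Rᵐᵒᵖ) f t) =
      (ncTensorFinsupp ι X t).mapRange f (map_zero f) := by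
  obtain ⟨w, rfl⟩ := Submodule.Quotient.mk_surjective _ t
  induction w with
  | zero => rw [ncMap_mk]; simp
  | add a b ha hb =>
    rw [Submodule.Quotient.mk_add, map_add, map_add, ha, hb, map_add,
      Finsupp.mapRange_add (map_add f)]
  | tmul c x =>
    rw [ncMap_mk, LinearMap.lTensor_tmul, ncTensorFinsupp_mk, ncTensorFinsupp_mk,
      TensorProduct.lift.tmul, TensorProduct.lift.tmul]
    ext i
    simp [finsuppTensorBil]

lemma ncMap_finsupp_injective {f : X →ₗ[R] Y} (hf : Function.Injective f) :
    Function.Injective (ncMap R (ι →₀ Rᵐᵒᵖ) f) := by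
  have hcomm : (Finsupp.mapRange f (map_zero f)) ∘ ncTensorFinsupp ι X =
      ncTensorFinsupp ι Y ∘ ncMap R (ι →₀ Rᵐᵒᵖ) f :=
    funext fun t => (ncTensorFinsupp_ncMap ι f t).symm
  refine Function.Injective.of_comp (f := ncTensorFinsupp ι Y) ?_
  rw [← hcomm]
  exact (Finsupp.mapRange_injective f (map_zero f) hf).comp
    (Function.LeftInverse.injective (ncTensorFinsuppInv_ncTensorFinsupp ι))

end Finsupp

section Flatness

variable {R : Type u} [Ring R]

lemma MAFlat.finsupp {M : Type u} [AddCommGroup M] [Module R M] (𝒜 : Set (Submodule R M))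
    (ι : Type u) : MAFlat R M 𝒜 (ι →₀ Rᵐᵒᵖ) :=
  fun A _ => ncMap_finsupp_injective ι A.injective_subtype

lemma ncMapL_injective_of_surjective_of_forall_submodule
    {P N N' X : Type u} [AddCommGroup P] [Module Rᵐᵒᵖ P] [AddCommGroup N] [Module Rᵐᵒᵖ N]
    [AddCommGroup N'] [Module Rᵐᵒᵖ N'] [AddCommGroup X] [Module R X]
    {π : P →ₗ[Rᵐᵒᵖ] N} (hπ : Function.Surjective π)
    (h : ∀ F : Submodule Rᵐᵒᵖ P, Function.Injective (ncMapL R F.subtype X))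
    {g : N' →ₗ[Rᵐᵒᵖ] N} (hg : Function.Injective g) :
    Function.Injective (ncMapL R g X) := by
  let F := (LinearMap.range g).comap π
  let π' : F →ₗ[Rᵐᵒᵖ] N' := (LinearEquiv.ofInjective g hg).symm.toLinearMap ∘ₗ
    (π ∘ₗ F.subtype).codRestrict (LinearMap.range g) fun x => x.2
  have hgπ' (x : F) : g (π' x) = π x := LinearEquiv.ofInjective_symm_apply (h := hg) g _
  have hπ' : Function.Surjective π' := fun n' => by
    obtain ⟨x, hx⟩ := hπ (g n')
    exact ⟨⟨x, by simp [F, hx]⟩, hg (by rw [hgπ', hx])⟩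
  have hexact : Function.Exact (F.subtype ∘ₗ (LinearMap.ker π').subtype) π := by
    intro x
    refine ⟨fun hx => ?_, ?_⟩
    · have hxF : x ∈ F := by simp [F, hx]
      exact ⟨⟨⟨x, hxF⟩, hg (by rw [hgπ', map_zero]; exact hx)⟩, rfl⟩
    · rintro ⟨⟨x, hx⟩, rfl⟩
      rw [LinearMap.mem_ker] at hx
      simp [← hgπ', hx]
  -- Lift `t` to `y ∈ F ⊗ X`; in `P ⊗ X` it comes from `ker π' ⊗ X`, hence so does `y`.
  refine (injective_iff_map_eq_zero _).mpr fun t ht => ?_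
  obtain ⟨y, rfl⟩ := ncMapL_surjective hπ' t
  have hy : ncMapL R π X (ncMapL R F.subtype X y) = 0 := by
    have hcomm : π ∘ₗ F.subtype = g ∘ₗ π' := LinearMap.ext fun x => (hgπ' x).symm
    rw [← ncMapL_comp, hcomm, ncMapL_comp, ht]
  obtain ⟨z, hz⟩ := ker_ncMapL_le_range_ncMapL (N'' := LinearMap.ker π') hexact hπ hy
  rw [ncMapL_comp] at hz
  rw [← h F hz, ← ncMapL_comp, LinearMap.comp_ker_subtype, ncMapL_zero]

end Flatness

/-- Let `M` be a flat left `R`-module. Then every `A ∈ 𝒜` is a flat left `R`-module if and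
only if every submodule of every `M`-`𝒜`-flat right `R`-module is `M`-`𝒜`-flat. -/
theorem stmt16 (R : Type u) [Ring R] (M : Type u) [AddCommGroup M] [Module R M]
    (𝒜 : Set (Submodule R M)) (hM : FlatLeftModule R M) :
    (∀ A ∈ 𝒜, FlatLeftModule R (↥A)) ↔
      (∀ (T : Type u) [AddCommGroup T] [Module Rᵐᵒᵖ T], MAFlat R M 𝒜 T →
        ∀ K : Submodule Rᵐᵒᵖ T, MAFlat R M 𝒜 (↥K)) := by
  refine ⟨fun hA T _ _ hT K A hAK => ?_, fun hK A hAK N N' _ _ _ _ g hg => ?_⟩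
  · have hKA : Function.Injective (ncMapL R K.subtype A) :=
      hA A hAK T K K.subtype K.injective_subtype
    exact ncMap_injective_of_ncMapL_injective hKA (hT A hAK)
  · have hF (P : Type u) [AddCommGroup P] [Module Rᵐᵒᵖ P] (hP : MAFlat R M 𝒜 P)
        (F : Submodule Rᵐᵒᵖ P) : Function.Injective (ncMapL R F.subtype A) :=
      ncMapL_injective_of_ncMap_injective (hK P hP F A hAK) (hM _ _ F.subtype F.injective_subtype)
    exact ncMapL_injective_of_surjective_of_forall_submodule
      (Finsupp.linearCombination_id_surjective Rᵐᵒᵖ N) (hF _ (MAFlat.finsupp 𝒜 N)) hg
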